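/- Assume the compatibility relation: ρ₁ + ρ₂ = ρ₁ρ₄ + ψ₂ if m₁ + m₂ ≤ n₁, and ρ₁ + ρ₂ = ψ₂ − ρ₅ρ₄ + 1 if m₁ + m₂ > n₁. For i ∈ {1,…,n₁}, j ∈ {1,…,n₂}, k ∈ {1,…,n₃}, set t̂₃ := t₃ − (m₃/n₂)t₂ − ((n₂−m₃)/n₂)(m₁/n₁)t₁ − (m₂/n₁)t₁ + ρ₃t₂ − (m₃/n₂)ρ₁t₁ + ρ₁t₁ + ρ₂t₁, θ_{i,j,k} := 2πι(k − (m₃/n₂)j − ((n₂−m₃)/n₂)(m₁/n₁)i − (m₂/n₁)i + t̂₃)/n₃, and z_{i,j,k} := (e^{sθ_{i,j,k}})_{s=0}^{n₃−1} ∈ ℂ^{n₃}. Then K₃ (z_{i,j,k} ⊗ y_{i,j} ⊗ xᵢ) = δz⁻¹(e^{θ_{i,j,k}} − 1) · (z_{i,j,k} ⊗ y_{i,j} ⊗ xᵢ), where xᵢ and y_{i,j} are as in Theorem 4.2 and ⊗ is the Kronecker product. (Theorem 4.4: eigenpairs of K₃ in the case cos θα − cos θβ cos θγ < 0.) -/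

import Mathlib

/-!
The matrices `S(a)`, `J₃` and `K₃` are all twisted cyclic shifts `[[0, α I_a], [β I_{n-a}, 0]]`
(for `J₃` and `K₃` with matrix blocks `α`, `β`). Such a shift maps the geometric vector
`(e^{sθ})ₛ` to `β e^{-aθ}` times itself as soon as `α e^{nθ} = β`, and a block shift maps
`u ⊗ v` to `(shift u) ⊗ v` when `v` is a common eigenvector of its blocks. Applying this to
`S(m)` with `xᵢ`, then to `J₃` with `y_{i,j} ⊗ xᵢ`, then to `K₃` with `z_{i,j,k} ⊗ y_{i,j} ⊗ xᵢ`
leaves three phase conditions `e^{nθ} = …`; they hold because `n θ` differs from the required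
phase by `2πι` times the integer index `i`, `j` or `k`, using the compatibility relation to
match the two cases of `J₃`.
-/

open Real Matrix

/-- The `n₁×n₁` block `S(a) = [[0, e^{−2πι t₁} I_a], [I_{n₁−a}, 0]]` with top-right
block of size `a × a` and bottom-left block of size `(n₁−a) × (n₁−a)`. -/
noncomputable def Sblk (n₁ : ℕ) (t₁ : ℝ) (a : ℕ) : Matrix (Fin n₁) (Fin n₁) ℂ :=
  Matrix.of fun s s' =>
    (if (s : ℕ) < a ∧ (s' : ℕ) = (s : ℕ) + (n₁ - a)
      then Complex.exp (-(2 * (π : ℂ) * Complex.I * (t₁ : ℂ))) else 0)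
    + (if a ≤ (s : ℕ) ∧ (s' : ℕ) + a = (s : ℕ) then 1 else 0)

/-- `J₁ = e^{2πι ρ₂ t₁} S(m₂)`. -/
noncomputable def J1 (n₁ : ℕ) (t₁ : ℝ) (ρ₂ m₂ : ℕ) : Matrix (Fin n₁) (Fin n₁) ℂ :=
  Complex.exp (2 * (π : ℂ) * Complex.I * (ρ₂ : ℂ) * (t₁ : ℂ)) • Sblk n₁ t₁ m₂

/-- `J₃` in the case `cos θα − cos θβ cos θγ < 0`: an `n₂ × n₂` block matrix with
`n₁ × n₁` blocks, top-right block `e^{−2πι t₂} I_{m₃} ⊗ J₁`, bottom-left block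
`e^{2πι(ρ₁ρ₄+ψ₂)t₁} I_{n₂−m₃} ⊗ S(m₁+m₂)` if `m₁ + m₂ ≤ n₁`
(resp. `e^{−2πι(ρ₅ρ₄−ψ₂)t₁} I_{n₂−m₃} ⊗ S(m₁+m₂−n₁)` if `m₁ + m₂ > n₁`),
all scaled by `e^{2πι ρ₃ t₂}`. -/
noncomputable def J3obtuse (n₁ n₂ : ℕ) (t₁ t₂ : ℝ) (ρ₁ ρ₂ ρ₃ ρ₄ ρ₅ ψ₂ m₁ m₂ m₃ : ℕ) :
    Matrix (Fin n₂ × Fin n₁) (Fin n₂ × Fin n₁) ℂ :=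
  Matrix.of fun p q =>
    Complex.exp (2 * (π : ℂ) * Complex.I * (ρ₃ : ℂ) * (t₂ : ℂ)) *
      ((if (p.1 : ℕ) < m₃ ∧ (q.1 : ℕ) = (p.1 : ℕ) + (n₂ - m₃) then
          Complex.exp (-(2 * (π : ℂ) * Complex.I * (t₂ : ℂ))) * J1 n₁ t₁ ρ₂ m₂ p.2 q.2
        else 0)
      + (if m₃ ≤ (p.1 : ℕ) ∧ (q.1 : ℕ) + m₃ = (p.1 : ℕ) then
          (if m₁ + m₂ ≤ n₁ then
            Complex.exp (2 * (π : ℂ) * Complex.I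
                * (((ρ₁ : ℂ) * (ρ₄ : ℂ) + (ψ₂ : ℂ)) * (t₁ : ℂ)))
              * Sblk n₁ t₁ (m₁ + m₂) p.2 q.2
          else
            Complex.exp (-(2 * (π : ℂ) * Complex.I
                * (((ρ₅ : ℂ) * (ρ₄ : ℂ) - (ψ₂ : ℂ)) * (t₁ : ℂ))))
              * Sblk n₁ t₁ (m₁ + m₂ - n₁) p.2 q.2)
        else 0))

/-- The Yee discretization `K₃` of `∂z`: `n₃ × n₃` block matrix with
`n₁n₂ × n₁n₂` blocks, `(1/δz)` times [`−I` on the block diagonal, `I` on the block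
superdiagonal, `e^{2πι t₃} J₃` at block `(n₃−1, 0)`]. -/
noncomputable def K3 (n₁ n₂ n₃ : ℕ) (δz t₃ : ℝ)
    (J : Matrix (Fin n₂ × Fin n₁) (Fin n₂ × Fin n₁) ℂ) :
    Matrix (Fin n₃ × Fin n₂ × Fin n₁) (Fin n₃ × Fin n₂ × Fin n₁) ℂ :=
  Matrix.of fun p q =>
    (1 / (δz : ℂ)) *
      ((if (q.1 : ℕ) = (p.1 : ℕ) + 1 ∧ q.2 = p.2 then 1 else 0)
        + (if (p.1 : ℕ) = n₃ - 1 ∧ (q.1 : ℕ) = 0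
            then Complex.exp (2 * (π : ℂ) * Complex.I * (t₃ : ℂ)) * J p.2 q.2 else 0)
        - (if p = q then 1 else 0))

noncomputable def expVec (n : ℕ) (θ : ℂ) : Fin n → ℂ := fun s => Complex.exp ((s : ℕ) * θ)

namespace Matrix

variable {R : Type*} [CommSemiring R] {ι : Type*} [Fintype ι]

/-- The block matrix `[[0, α I_a], [β I_{n-a}, 0]]`. -/
def twistedShift (n a : ℕ) (α β : R) : Matrix (Fin n) (Fin n) R :=
  of fun s s' =>
    (if (s : ℕ) < a ∧ (s' : ℕ) = (s : ℕ) + (n - a) then α else 0)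
    + (if a ≤ (s : ℕ) ∧ (s' : ℕ) + a = (s : ℕ) then β else 0)

theorem twistedShift_mulVec_apply {n a : ℕ} (ha : a ≤ n) (α β : R) (u : Fin n → R)
    (s : Fin n) :
    (twistedShift n a α β *ᵥ u) s =
      if h : (s : ℕ) < a then α * u ⟨s + (n - a), by omega⟩
      else β * u ⟨s - a, by omega⟩ := by
  simp only [mulVec, dotProduct, twistedShift, of_apply, add_mul, Finset.sum_add_distrib]
  split_ifs with h
  · simp only [h, not_le.2 h, true_and, false_and, if_false, zero_mul,
      Finset.sum_const_zero, add_zero]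
    rw [Finset.sum_eq_single ⟨s + (n - a), by omega⟩
      (fun b _ hb => by rw [if_neg fun heq => hb (Fin.ext heq), zero_mul]) (by simp), if_pos rfl]
  · simp only [h, not_lt.1 h, true_and, false_and, if_false, zero_mul,
      Finset.sum_const_zero, zero_add]
    rw [Finset.sum_eq_single ⟨s - a, by omega⟩
      (fun b _ hb => by rw [if_neg fun heq => hb (Fin.ext (Nat.eq_sub_of_add_eq heq)), zero_mul])
      (by simp), if_pos (Nat.sub_add_cancel (not_lt.1 h))]

theorem twistedShift_mulVec_expVec {n a : ℕ} (ha : a ≤ n) {α β θ : ℂ}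
    (h : α * Complex.exp (n * θ) = β) :
    twistedShift n a α β *ᵥ expVec n θ = (β * Complex.exp (-(a * θ))) • expVec n θ := by
  funext s
  rw [twistedShift_mulVec_apply ha, ← h]
  split_ifs with hs
  · simp only [expVec, Pi.smul_apply, smul_eq_mul, mul_assoc, ← Complex.exp_add]
    congr 2
    push_cast [Nat.cast_sub ha]
    ring
  · simp only [expVec, Pi.smul_apply, smul_eq_mul, mul_assoc, ← Complex.exp_add]
    congr 2
    push_cast [Nat.cast_sub (not_lt.1 hs)]
    ring

def blockTwistedShift (n a : ℕ) (A B : Matrix ι ι R) : Matrix (Fin n × ι) (Fin n × ι) R :=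
  of fun p q => twistedShift n a (A p.2 q.2) (B p.2 q.2) p.1 q.1

theorem blockTwistedShift_mulVec {n a : ℕ} {A B : Matrix ι ι R} {v : ι → R} {μ ν : R}
    (hA : A *ᵥ v = μ • v) (hB : B *ᵥ v = ν • v) (u : Fin n → R) :
    blockTwistedShift n a A B *ᵥ (fun q => u q.1 * v q.2)
      = fun p => (twistedShift n a μ ν *ᵥ u) p.1 * v p.2 := by
  funext p
  have hA' : ∑ q, A p.2 q * v q = μ * v p.2 := congrFun hA p.2
  have hB' : ∑ q, B p.2 q * v q = ν * v p.2 := congrFun hB p.2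
  simp only [mulVec, dotProduct, Fintype.sum_prod_type, Finset.sum_mul]
  refine Finset.sum_congr rfl fun q₁ _ => ?_
  have hpull : ∀ c : ι → R, ∑ q, c q * (u q₁ * v q) = u q₁ * ∑ q, c q * v q := fun c => by
    rw [Finset.mul_sum]
    exact Finset.sum_congr rfl fun q _ => by ring
  simp only [blockTwistedShift, twistedShift, of_apply, hpull]
  split_ifs <;>
    simp only [add_zero, zero_add, zero_mul, mul_zero, add_mul, Finset.sum_add_distrib, hA', hB',
      Finset.sum_const_zero] <;> ring

end Matrix

theorem Sblk_eq_twistedShift (n₁ : ℕ) (t₁ : ℝ) (a : ℕ) :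
    Sblk n₁ t₁ a = twistedShift n₁ a (Complex.exp (-(2 * (π : ℂ) * Complex.I * (t₁ : ℂ)))) 1 :=
  rfl

theorem Sblk_mulVec_expVec {n₁ a : ℕ} {t₁ : ℝ} {θ : ℂ} (ha : a ≤ n₁)
    (hθ : Complex.exp (n₁ * θ) = Complex.exp (2 * (π : ℂ) * Complex.I * (t₁ : ℂ))) :
    Sblk n₁ t₁ a *ᵥ expVec n₁ θ = Complex.exp (-(a * θ)) • expVec n₁ θ := by
  rw [Sblk_eq_twistedShift, twistedShift_mulVec_expVec ha
    (by rw [hθ, ← Complex.exp_add, neg_add_cancel, Complex.exp_zero]), one_mul]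

theorem J3obtuse_eq (n₁ n₂ : ℕ) (t₁ t₂ : ℝ) (ρ₁ ρ₂ ρ₃ ρ₄ ρ₅ ψ₂ m₁ m₂ m₃ : ℕ) :
    J3obtuse n₁ n₂ t₁ t₂ ρ₁ ρ₂ ρ₃ ρ₄ ρ₅ ψ₂ m₁ m₂ m₃ =
      Complex.exp (2 * (π : ℂ) * Complex.I * (ρ₃ : ℂ) * (t₂ : ℂ)) •
        blockTwistedShift n₂ m₃
          (Complex.exp (-(2 * (π : ℂ) * Complex.I * (t₂ : ℂ))) • J1 n₁ t₁ ρ₂ m₂)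
          (if m₁ + m₂ ≤ n₁ then
            Complex.exp (2 * (π : ℂ) * Complex.I * (((ρ₁ : ℂ) * (ρ₄ : ℂ) + (ψ₂ : ℂ)) * (t₁ : ℂ)))
              • Sblk n₁ t₁ (m₁ + m₂)
          else
            Complex.exp (-(2 * (π : ℂ) * Complex.I * (((ρ₅ : ℂ) * (ρ₄ : ℂ) - (ψ₂ : ℂ)) * (t₁ : ℂ))))
              • Sblk n₁ t₁ (m₁ + m₂ - n₁)) := by
  ext p q
  simp only [J3obtuse, blockTwistedShift, twistedShift, of_apply, Matrix.smul_apply, smul_eq_mul]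
  split_ifs <;> rfl

theorem J3obtuse_mulVec_expVec_mul {n₁ n₂ : ℕ} {t₁ t₂ : ℝ} {ρ₁ ρ₂ ρ₃ ρ₄ ρ₅ ψ₂ m₁ m₂ m₃ : ℕ}
    (hm₁ : m₁ ≤ n₁) (hm₂ : m₂ ≤ n₁) (hm₃ : m₃ ≤ n₂)
    (hcompat₁ : m₁ + m₂ ≤ n₁ → (ρ₁ : ℤ) + ρ₂ = (ρ₁ : ℤ) * ρ₄ + ψ₂)
    (hcompat₂ : n₁ < m₁ + m₂ → (ρ₁ : ℤ) + ρ₂ = (ψ₂ : ℤ) - (ρ₅ : ℤ) * ρ₄ + 1)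
    {θ₁ θ₂ : ℂ}
    (hθ₁ : Complex.exp (n₁ * θ₁) = Complex.exp (2 * (π : ℂ) * Complex.I * (t₁ : ℂ)))
    (hθ₂ : Complex.exp (n₂ * θ₂) = Complex.exp (2 * (π : ℂ) * Complex.I * (t₂ : ℂ)
      + 2 * (π : ℂ) * Complex.I * (ρ₁ : ℂ) * (t₁ : ℂ) - m₁ * θ₁)) :
    J3obtuse n₁ n₂ t₁ t₂ ρ₁ ρ₂ ρ₃ ρ₄ ρ₅ ψ₂ m₁ m₂ m₃ *ᵥ
        (fun q => expVec n₂ θ₂ q.1 * expVec n₁ θ₁ q.2)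
      = Complex.exp (2 * (π : ℂ) * Complex.I * (ρ₃ : ℂ) * (t₂ : ℂ)
          + 2 * (π : ℂ) * Complex.I * ((ρ₁ : ℂ) + ρ₂) * (t₁ : ℂ)
          - (m₁ + m₂) * θ₁ - m₃ * θ₂)
        • (fun q => expVec n₂ θ₂ q.1 * expVec n₁ θ₁ q.2) := by
  have hTop : (Complex.exp (-(2 * (π : ℂ) * Complex.I * (t₂ : ℂ))) • J1 n₁ t₁ ρ₂ m₂)
        *ᵥ expVec n₁ θ₁
      = Complex.exp (-(2 * (π : ℂ) * Complex.I * (t₂ : ℂ))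
          + 2 * (π : ℂ) * Complex.I * (ρ₂ : ℂ) * (t₁ : ℂ) - m₂ * θ₁) • expVec n₁ θ₁ := by
    rw [J1, smul_mulVec, smul_mulVec, Sblk_mulVec_expVec hm₂ hθ₁, smul_smul, smul_smul,
      ← Complex.exp_add, ← Complex.exp_add, sub_eq_add_neg]
  have hBottom : (if m₁ + m₂ ≤ n₁ then
        Complex.exp (2 * (π : ℂ) * Complex.I * (((ρ₁ : ℂ) * (ρ₄ : ℂ) + (ψ₂ : ℂ)) * (t₁ : ℂ)))
          • Sblk n₁ t₁ (m₁ + m₂)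
      else
        Complex.exp (-(2 * (π : ℂ) * Complex.I * (((ρ₅ : ℂ) * (ρ₄ : ℂ) - (ψ₂ : ℂ)) * (t₁ : ℂ))))
          • Sblk n₁ t₁ (m₁ + m₂ - n₁)) *ᵥ expVec n₁ θ₁
      = Complex.exp (2 * (π : ℂ) * Complex.I * ((ρ₁ : ℂ) + ρ₂) * (t₁ : ℂ)
          - (m₁ + m₂) * θ₁) • expVec n₁ θ₁ := by
    split_ifs with h
    · have hρ : ((ρ₁ : ℂ) + ρ₂) = ρ₁ * ρ₄ + ψ₂ := by exact_mod_cast hcompat₁ h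
      rw [smul_mulVec, Sblk_mulVec_expVec h hθ₁, smul_smul, ← Complex.exp_add, hρ]
      congr 2
      push_cast
      ring
    · have hρ : ((ρ₁ : ℂ) + ρ₂) = ψ₂ - ρ₅ * ρ₄ + 1 := by exact_mod_cast hcompat₂ (not_le.1 h)
      -- the shift `m₁ + m₂ - n₁` is compensated by the twist `exp (n₁ θ₁) = exp (2πι t₁)`
      have hshift : Complex.exp (-(2 * (π : ℂ) * Complex.I * ((ρ₅ * ρ₄ - ψ₂) * t₁))
            + -(((m₁ + m₂ - n₁ : ℕ) : ℂ) * θ₁))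
          = Complex.exp (2 * (π : ℂ) * Complex.I * (ψ₂ - ρ₅ * ρ₄) * t₁ - (m₁ + m₂) * θ₁)
            * Complex.exp (n₁ * θ₁) := by
        rw [← Complex.exp_add, Nat.cast_sub (not_le.1 h).le]
        congr 1
        push_cast
        ring
      rw [smul_mulVec, Sblk_mulVec_expVec (by omega) hθ₁, smul_smul, ← Complex.exp_add, hshift,
        hθ₁, ← Complex.exp_add, hρ]
      congr 2
      ring
  rw [J3obtuse_eq, smul_mulVec, blockTwistedShift_mulVec hTop hBottom,
    twistedShift_mulVec_expVec hm₃ (by rw [hθ₂, ← Complex.exp_add]; congr 1; ring)]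
  funext q
  simp only [Pi.smul_apply, smul_eq_mul, ← mul_assoc, ← Complex.exp_add]
  congr 3
  ring

theorem K3_eq_blockTwistedShift (n₁ n₂ n₃ : ℕ) (δz t₃ : ℝ)
    (J : Matrix (Fin n₂ × Fin n₁) (Fin n₂ × Fin n₁) ℂ) :
    K3 n₁ n₂ n₃ δz t₃ J = (1 / (δz : ℂ)) •
      (blockTwistedShift n₃ (n₃ - 1) 1
        (Complex.exp (2 * (π : ℂ) * Complex.I * (t₃ : ℂ)) • J) - 1) := by
  ext p q
  have hp := p.1.isLt
  have hq := q.1.isLt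
  simp only [K3, blockTwistedShift, twistedShift, of_apply, Matrix.smul_apply, Matrix.sub_apply,
    smul_eq_mul, one_apply, ← ite_and]
  congr 3
  · exact if_congr (and_congr (by omega) eq_comm) rfl rfl
  · exact if_congr (by omega) rfl rfl

theorem K3_mulVec_expVec_mul {n₁ n₂ n₃ : ℕ} (δz t₃ : ℝ)
    {J : Matrix (Fin n₂ × Fin n₁) (Fin n₂ × Fin n₁) ℂ} {w : Fin n₂ × Fin n₁ → ℂ} {μ θ : ℂ}
    (hJ : J *ᵥ w = μ • w)
    (hθ : Complex.exp (n₃ * θ) = Complex.exp (2 * (π : ℂ) * Complex.I * (t₃ : ℂ)) * μ) :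
    K3 n₁ n₂ n₃ δz t₃ J *ᵥ (fun p => expVec n₃ θ p.1 * w p.2)
      = ((1 / (δz : ℂ)) * (Complex.exp θ - 1)) • (fun p => expVec n₃ θ p.1 * w p.2) := by
  have hOne : (1 : Matrix _ _ ℂ) *ᵥ w = (1 : ℂ) • w := by rw [one_mulVec, one_smul]
  have hTwist : (Complex.exp (2 * (π : ℂ) * Complex.I * (t₃ : ℂ)) • J) *ᵥ w
      = (Complex.exp (2 * (π : ℂ) * Complex.I * (t₃ : ℂ)) * μ) • w := by
    rw [smul_mulVec, hJ, smul_smul]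
  rw [K3_eq_blockTwistedShift, smul_mulVec, sub_mulVec, one_mulVec,
    blockTwistedShift_mulVec hOne hTwist,
    twistedShift_mulVec_expVec (Nat.sub_le n₃ 1) (by rw [one_mul, hθ])]
  funext p
  have hn₃ : 1 ≤ n₃ := Nat.one_le_of_lt p.1.isLt
  have hshift : Complex.exp (n₃ * θ) * Complex.exp (-(((n₃ - 1 : ℕ) : ℂ) * θ))
      = Complex.exp θ := by
    rw [← Complex.exp_add, Nat.cast_sub hn₃]
    congr 1
    push_cast
    ring
  simp only [Pi.smul_apply, Pi.sub_apply, smul_eq_mul, ← hθ, hshift]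
  ring

theorem Complex.exp_two_pi_I_mul_nat_add (k : ℕ) (w : ℂ) :
    Complex.exp (2 * (π : ℂ) * Complex.I * k + w) = Complex.exp w := by
  rw [Complex.exp_add, mul_comm _ (k : ℂ), Complex.exp_nat_mul_two_pi_mul_I, one_mul]

theorem stmt_8_general (n₁ n₂ n₃ : ℕ) (hn₁ : 1 ≤ n₁) (hn₂ : 1 ≤ n₂) (hn₃ : 1 ≤ n₃)
    (δz : ℝ) (t₁ t₂ t₃ : ℝ)
    (ρ₁ ρ₂ ρ₃ ρ₄ ρ₅ ψ₂ : ℕ)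
    (m₁ m₂ m₃ : ℕ) (hm₁ : m₁ ≤ n₁) (hm₂ : m₂ ≤ n₁) (hm₃ : m₃ ≤ n₂)
    (hcompat₁ : m₁ + m₂ ≤ n₁ → (ρ₁ : ℤ) + ρ₂ = (ρ₁ : ℤ) * ρ₄ + ψ₂)
    (hcompat₂ : n₁ < m₁ + m₂ → (ρ₁ : ℤ) + ρ₂ = (ψ₂ : ℤ) - (ρ₅ : ℤ) * ρ₄ + 1)
    (i j k : ℕ)
    (θi : ℂ) (hθi : θi = 2 * (π : ℂ) * Complex.I * ((i : ℂ) + (t₁ : ℂ)) / (n₁ : ℂ))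
    (x : Fin n₁ → ℂ) (hx : ∀ s : Fin n₁, x s = Complex.exp (((s : ℕ) : ℂ) * θi))
    (t₂hat : ℝ) (ht₂hat : t₂hat = t₂ - (m₁ : ℝ) / n₁ * t₁ + (ρ₁ : ℝ) * t₁)
    (θij : ℂ)
    (hθij : θij = 2 * (π : ℂ) * Complex.I
      * ((((j : ℝ) - (m₁ : ℝ) / n₁ * i + t₂hat : ℝ)) : ℂ) / (n₂ : ℂ))
    (y : Fin n₂ → ℂ) (hy : ∀ s : Fin n₂, y s = Complex.exp (((s : ℕ) : ℂ) * θij))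
    (t₃hat : ℝ)
    (ht₃hat : t₃hat = t₃ - (m₃ : ℝ) / n₂ * t₂
      - ((n₂ : ℝ) - m₃) / n₂ * ((m₁ : ℝ) / n₁) * t₁
      - (m₂ : ℝ) / n₁ * t₁
      + (ρ₃ : ℝ) * t₂ - (m₃ : ℝ) / n₂ * ((ρ₁ : ℝ) * t₁)
      + (ρ₁ : ℝ) * t₁ + (ρ₂ : ℝ) * t₁)
    (θijk : ℂ)
    (hθijk : θijk = 2 * (π : ℂ) * Complex.I
      * ((((k : ℝ) - (m₃ : ℝ) / n₂ * j
          - ((n₂ : ℝ) - m₃) / n₂ * ((m₁ : ℝ) / n₁) * i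
          - (m₂ : ℝ) / n₁ * i + t₃hat : ℝ)) : ℂ) / (n₃ : ℂ))
    (z : Fin n₃ → ℂ) (hz : ∀ s : Fin n₃, z s = Complex.exp (((s : ℕ) : ℂ) * θijk)) :
    (K3 n₁ n₂ n₃ δz t₃ (J3obtuse n₁ n₂ t₁ t₂ ρ₁ ρ₂ ρ₃ ρ₄ ρ₅ ψ₂ m₁ m₂ m₃)).mulVec
        (fun p => z p.1 * y p.2.1 * x p.2.2)
      = ((1 / (δz : ℂ)) * (Complex.exp θijk - 1))
          • (fun p => z p.1 * y p.2.1 * x p.2.2) := by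
  obtain rfl : x = expVec n₁ θi := funext hx
  obtain rfl : y = expVec n₂ θij := funext hy
  obtain rfl : z = expVec n₃ θijk := funext hz
  have hn₁' : (n₁ : ℂ) ≠ 0 := by exact_mod_cast (by omega : n₁ ≠ 0)
  have hn₂' : (n₂ : ℂ) ≠ 0 := by exact_mod_cast (by omega : n₂ ≠ 0)
  have hn₃' : (n₃ : ℂ) ≠ 0 := by exact_mod_cast (by omega : n₃ ≠ 0)
  have hθ₁ : Complex.exp (n₁ * θi) = Complex.exp (2 * (π : ℂ) * Complex.I * t₁) := by
    rw [← Complex.exp_two_pi_I_mul_nat_add i (2 * (π : ℂ) * Complex.I * t₁)]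
    congr 1
    rw [hθi]
    field_simp
  have hθ₂ : Complex.exp (n₂ * θij) = Complex.exp (2 * (π : ℂ) * Complex.I * t₂
      + 2 * (π : ℂ) * Complex.I * ρ₁ * t₁ - m₁ * θi) := by
    rw [← Complex.exp_two_pi_I_mul_nat_add j (_ - _)]
    congr 1
    rw [hθij, hθi, ht₂hat]
    push_cast
    field_simp
    ring
  have hθ₃ : Complex.exp (n₃ * θijk) = Complex.exp (2 * (π : ℂ) * Complex.I * t₃)
      * Complex.exp (2 * (π : ℂ) * Complex.I * ρ₃ * t₂
          + 2 * (π : ℂ) * Complex.I * ((ρ₁ : ℂ) + ρ₂) * t₁ - (m₁ + m₂) * θi - m₃ * θij) := by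
    rw [← Complex.exp_add, ← Complex.exp_two_pi_I_mul_nat_add k (_ + _)]
    congr 1
    rw [hθijk, hθij, hθi, ht₃hat, ht₂hat]
    push_cast
    field_simp
    ring
  simpa only [mul_assoc] using K3_mulVec_expVec_mul δz t₃
    (J3obtuse_mulVec_expVec_mul hm₁ hm₂ hm₃ hcompat₁ hcompat₂ hθ₁ hθ₂) hθ₃

/-- Theorem 4.4: eigenpairs of `K₃` in the case `cos θα − cos θβ cos θγ < 0`. -/
theorem stmt_8 (n₁ n₂ n₃ : ℕ) (hn₁ : 1 ≤ n₁) (hn₂ : 1 ≤ n₂) (hn₃ : 1 ≤ n₃)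
    (δz : ℝ) (hδz : 0 < δz) (t₁ t₂ t₃ : ℝ)
    (ρ₁ ρ₂ ρ₃ ρ₄ ρ₅ ψ₂ : ℕ) (hρ₁ : ρ₁ ≤ 1) (hρ₂ : ρ₂ ≤ 1) (hρ₃ : ρ₃ ≤ 1)
    (hρ₄ : ρ₄ ≤ 1) (hρ₅ : ρ₅ ≤ 1) (hψ₂ : ψ₂ ≤ 1)
    (m₁ m₂ m₃ : ℕ) (hm₁ : m₁ ≤ n₁) (hm₂ : m₂ ≤ n₁) (hm₃ : m₃ ≤ n₂)
    (hcompat₁ : m₁ + m₂ ≤ n₁ → (ρ₁ : ℤ) + ρ₂ = (ρ₁ : ℤ) * ρ₄ + ψ₂)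
    (hcompat₂ : n₁ < m₁ + m₂ → (ρ₁ : ℤ) + ρ₂ = (ψ₂ : ℤ) - (ρ₅ : ℤ) * ρ₄ + 1)
    (i j k : ℕ) (hi : 1 ≤ i) (hin : i ≤ n₁) (hj : 1 ≤ j) (hjn : j ≤ n₂)
    (hk : 1 ≤ k) (hkn : k ≤ n₃)
    (θi : ℂ) (hθi : θi = 2 * (π : ℂ) * Complex.I * ((i : ℂ) + (t₁ : ℂ)) / (n₁ : ℂ))
    (x : Fin n₁ → ℂ) (hx : ∀ s : Fin n₁, x s = Complex.exp (((s : ℕ) : ℂ) * θi))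
    (t₂hat : ℝ) (ht₂hat : t₂hat = t₂ - (m₁ : ℝ) / n₁ * t₁ + (ρ₁ : ℝ) * t₁)
    (θij : ℂ)
    (hθij : θij = 2 * (π : ℂ) * Complex.I
      * ((((j : ℝ) - (m₁ : ℝ) / n₁ * i + t₂hat : ℝ)) : ℂ) / (n₂ : ℂ))
    (y : Fin n₂ → ℂ) (hy : ∀ s : Fin n₂, y s = Complex.exp (((s : ℕ) : ℂ) * θij))
    (t₃hat : ℝ)
    (ht₃hat : t₃hat = t₃ - (m₃ : ℝ) / n₂ * t₂
      - ((n₂ : ℝ) - m₃) / n₂ * ((m₁ : ℝ) / n₁) * t₁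
      - (m₂ : ℝ) / n₁ * t₁
      + (ρ₃ : ℝ) * t₂ - (m₃ : ℝ) / n₂ * ((ρ₁ : ℝ) * t₁)
      + (ρ₁ : ℝ) * t₁ + (ρ₂ : ℝ) * t₁)
    (θijk : ℂ)
    (hθijk : θijk = 2 * (π : ℂ) * Complex.I
      * ((((k : ℝ) - (m₃ : ℝ) / n₂ * j
          - ((n₂ : ℝ) - m₃) / n₂ * ((m₁ : ℝ) / n₁) * i
          - (m₂ : ℝ) / n₁ * i + t₃hat : ℝ)) : ℂ) / (n₃ : ℂ))
    (z : Fin n₃ → ℂ) (hz : ∀ s : Fin n₃, z s = Complex.exp (((s : ℕ) : ℂ) * θijk)) :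
    (K3 n₁ n₂ n₃ δz t₃ (J3obtuse n₁ n₂ t₁ t₂ ρ₁ ρ₂ ρ₃ ρ₄ ρ₅ ψ₂ m₁ m₂ m₃)).mulVec
        (fun p => z p.1 * y p.2.1 * x p.2.2)
      = ((1 / (δz : ℂ)) * (Complex.exp θijk - 1))
          • (fun p => z p.1 * y p.2.1 * x p.2.2) :=
  stmt_8_general n₁ n₂ n₃ hn₁ hn₂ hn₃ δz t₁ t₂ t₃ ρ₁ ρ₂ ρ₃ ρ₄ ρ₅ ψ₂ m₁ m₂ m₃ hm₁ hm₂ hm₃ hcompat₁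
    hcompat₂ i j k θi hθi x hx t₂hat ht₂hat θij hθij y hy t₃hat ht₃hat θijk hθijk z hz
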